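/- Let 𝔅 be a bornology on a metric space X with compact base. Then X has the 𝔅^s-Hurewicz property if and only if X^n has the (𝔅ⁿ)^s-Hurewicz property for each n ∈ ℕ. -/
import Mathlib


def IsBornologyOn {α : Type*} (𝔅 : Set (Set α)) : Prop :=
  (⋃₀ 𝔅 = Set.univ) ∧ (∀ B ∈ 𝔅, ∀ A ⊆ B, A ∈ 𝔅) ∧ (∀ A ∈ 𝔅, ∀ B ∈ 𝔅, A ∪ B ∈ 𝔅)

def IsBaseFor {α : Type*} (𝔅 𝔅₀ : Set (Set α)) : Prop :=
  𝔅₀ ⊆ 𝔅 ∧ ∀ B ∈ 𝔅, ∃ B₀ ∈ 𝔅₀, B ⊆ B₀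

def enl {α : Type*} [MetricSpace α] (B : Set α) (δ : ℝ) : Set α :=
  ⋃ x ∈ B, Metric.ball x δ

def BsCover {α : Type*} [MetricSpace α] (𝔅 𝒰 : Set (Set α)) : Prop :=
  (∀ u ∈ 𝒰, IsOpen u) ∧ Set.univ ∉ 𝒰 ∧
    ∀ B ∈ 𝔅, ∃ u ∈ 𝒰, ∃ δ > 0, enl B δ ⊆ u

def BsHurewicz {α : Type*} [MetricSpace α] (𝔅 : Set (Set α)) : Prop :=
  ∀ U : ℕ → Set (Set α), (∀ n, BsCover 𝔅 (U n)) →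
    ∃ V : ℕ → Set (Set α), (∀ n, V n ⊆ U n) ∧ (∀ n, (V n).Finite) ∧
      ∀ B ∈ 𝔅, ∃ n₀ : ℕ, ∀ n ≥ n₀, ∃ δ > 0, ∃ u ∈ V n, enl B δ ⊆ u

def cube {α : Type*} (n : ℕ) (B : Set α) : Set (Fin n → α) := {y | ∀ i, y i ∈ B}

def bornPow {α : Type*} (n : ℕ) (𝔅 : Set (Set α)) : Set (Set (Fin n → α)) :=
  {C | ∃ B ∈ 𝔅, C ⊆ cube n B}

lemma mem_enl {α : Type*} [MetricSpace α] {B : Set α} {δ : ℝ} {x : α} :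
    x ∈ enl B δ ↔ ∃ b ∈ B, dist x b < δ := by
  simp [enl, Metric.mem_ball]

lemma enl_mono {α : Type*} [MetricSpace α] {A B : Set α} (h : A ⊆ B) (δ : ℝ) :
    enl A δ ⊆ enl B δ := by
  intro x hx
  obtain ⟨b, hb, hd⟩ := mem_enl.mp hx
  exact mem_enl.mpr ⟨b, h hb, hd⟩

lemma isOpen_enl {α : Type*} [MetricSpace α] (B : Set α) (δ : ℝ) :
    IsOpen (enl B δ) :=
  isOpen_biUnion fun _ _ => Metric.isOpen_ball

lemma isOpen_cube {α : Type*} [MetricSpace α] {n : ℕ} {V : Set α} (h : IsOpen V) :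
    IsOpen (cube n V) := by
  have : cube n V = Set.pi Set.univ (fun _ : Fin n => V) := by
    ext y; simp [cube, Set.mem_pi]
  rw [this]
  exact isOpen_set_pi Set.finite_univ (fun _ _ => h)

lemma cube_univ {α : Type*} (n : ℕ) : cube n (Set.univ : Set α) = Set.univ := by
  ext y; simp [cube]

theorem stmt15 {X : Type*} [MetricSpace X]
    (𝔅 𝔅₀ : Set (Set X)) (hb : IsBornologyOn 𝔅) (hbase : IsBaseFor 𝔅 𝔅₀)
    (hcpt : ∀ B ∈ 𝔅₀, IsCompact B) :
    BsHurewicz 𝔅 ↔ ∀ n : ℕ, 0 < n → BsHurewicz (bornPow n 𝔅) := by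
  constructor
  · -- forward
    intro hH n _ U hU
    -- covers of X whose cubes refine U k
    set W : ℕ → Set (Set X) :=
      fun k => {V | IsOpen V ∧ V ≠ Set.univ ∧ ∃ u ∈ U k, cube n V ⊆ u} with hWdef
    have hW : ∀ k, BsCover 𝔅 (W k) := by
      intro k
      refine ⟨fun V hV => hV.1, ?_, ?_⟩
      · intro h; exact h.2.1 rfl
      · intro B hB
        obtain ⟨B₀, hB₀, hBB₀⟩ := hbase.2 B hB
        have hcube : cube n B₀ ∈ bornPow n 𝔅 := ⟨B₀, hbase.1 hB₀, subset_rfl⟩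
        obtain ⟨u, hu, δ, hδ, hsub⟩ := (hU k).2.2 _ hcube
        have hcubesub : cube n (enl B₀ (δ / 2)) ⊆ enl (cube n B₀) δ := by
          intro y hy
          have hch : ∀ i, ∃ b ∈ B₀, dist (y i) b < δ / 2 := fun i => mem_enl.mp (hy i)
          choose x hx hdx using hch
          refine mem_enl.mpr ⟨x, hx, ?_⟩
          rw [dist_pi_lt_iff hδ]
          exact fun i => (hdx i).trans (by linarith)
        have hVinW : enl B₀ (δ / 2) ∈ W k := by
          refine ⟨isOpen_enl _ _, ?_, u, hu, hcubesub.trans hsub⟩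
          intro h
          apply (hU k).2.1
          have : u = Set.univ := by
            apply Set.eq_univ_of_univ_subset
            rw [← cube_univ n, ← h]
            exact hcubesub.trans hsub
          rwa [← this]
        exact ⟨enl B₀ (δ / 2), hVinW, δ / 2, by linarith, enl_mono hBB₀ _⟩
    obtain ⟨Vf, hVfsub, hVffin, hVf⟩ := hH W hW
    -- choose refining elements of U k
    have hchoice : ∀ k, ∀ V ∈ Vf k, ∃ u ∈ U k, cube n V ⊆ u :=
      fun k V hV => (hVfsub k hV).2.2
    classical
    set g : ℕ → Set X → Set (Fin n → X) :=
      fun k V => if h : ∃ u ∈ U k, cube n V ⊆ u then h.choose else ∅ with hgdef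
    have hg : ∀ k, ∀ V ∈ Vf k, g k V ∈ U k ∧ cube n V ⊆ g k V := by
      intro k V hV
      have h := hchoice k V hV
      simp only [hgdef, dif_pos h]
      exact ⟨h.choose_spec.1, h.choose_spec.2⟩
    refine ⟨fun k => g k '' Vf k, ?_, fun k => (hVffin k).image _, ?_⟩
    · rintro k u ⟨V, hV, rfl⟩
      exact (hg k V hV).1
    · rintro C ⟨B, hB, hCB⟩
      obtain ⟨n₀, hn₀⟩ := hVf B hB
      refine ⟨n₀, fun m hm => ?_⟩
      obtain ⟨δ, hδ, V, hV, hsub⟩ := hn₀ m hm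
      refine ⟨δ, hδ, g m V, ⟨V, hV, rfl⟩, ?_⟩
      intro y hy
      obtain ⟨c, hc, hd⟩ := mem_enl.mp hy
      apply (hg m V hV).2
      intro i
      exact hsub (mem_enl.mpr ⟨c i, hCB hc i, lt_of_le_of_lt (dist_le_pi_dist y c i) hd⟩)
  · -- backward, using n = 1
    intro h U hU
    have h1 := h 1 one_pos
    classical
    set p : (Fin 1 → X) → X := fun f => f 0 with hpdef
    have hpsurj : Function.Surjective p := fun x => ⟨fun _ => x, rfl⟩
    set U' : ℕ → Set (Set (Fin 1 → X)) := fun k => (fun u => p ⁻¹' u) '' U k with hU'def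
    have hU' : ∀ k, BsCover (bornPow 1 𝔅) (U' k) := by
      intro k
      refine ⟨?_, ?_, ?_⟩
      · rintro v ⟨u, hu, rfl⟩
        exact ((hU k).1 u hu).preimage (continuous_apply 0)
      · rintro ⟨u, hu, huniv⟩
        apply (hU k).2.1
        have : u = Set.univ := by
          apply Set.eq_univ_of_forall
          intro x
          have heq : p ⁻¹' u = Set.univ := huniv
          have : (fun _ : Fin 1 => x) ∈ p ⁻¹' u := by rw [heq]; trivial
          exact this
        rwa [← this]
      · rintro C ⟨B, hB, hCB⟩
        obtain ⟨u, hu, δ, hδ, hsub⟩ := (hU k).2.2 B hB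
        refine ⟨p ⁻¹' u, ⟨u, hu, rfl⟩, δ, hδ, ?_⟩
        intro f hf
        obtain ⟨c, hc, hd⟩ := mem_enl.mp hf
        apply hsub
        exact mem_enl.mpr ⟨c 0, hCB hc 0, lt_of_le_of_lt (dist_le_pi_dist f c 0) hd⟩
    obtain ⟨V', hV'sub, hV'fin, hV'⟩ := h1 U' hU'
    have hpinj : Function.Injective (fun u : Set X => p ⁻¹' u) := by
      intro a b hab
      have := congrArg (Set.image p) hab
      rwa [Set.image_preimage_eq _ hpsurj, Set.image_preimage_eq _ hpsurj] at this
    refine ⟨fun k => {u ∈ U k | p ⁻¹' u ∈ V' k}, fun k => Set.sep_subset _ _, ?_, ?_⟩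
    · intro k
      apply Set.Finite.of_finite_image (f := fun u => p ⁻¹' u)
      · exact (hV'fin k).subset (by rintro _ ⟨u, ⟨_, hu⟩, rfl⟩; exact hu)
      · exact hpinj.injOn
    · intro B hB
      have hcube : cube 1 B ∈ bornPow 1 𝔅 := ⟨B, hB, subset_rfl⟩
      obtain ⟨n₀, hn₀⟩ := hV' _ hcube
      refine ⟨n₀, fun m hm => ?_⟩
      obtain ⟨δ, hδ, v, hv, hsub⟩ := hn₀ m hm
      obtain ⟨u, hu, rfl⟩ := hV'sub m hv
      refine ⟨δ, hδ, u, ⟨hu, hv⟩, ?_⟩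
      intro x hx
      obtain ⟨b, hbB, hd⟩ := mem_enl.mp hx
      have : (fun _ : Fin 1 => x) ∈ enl (cube 1 B) δ := by
        refine mem_enl.mpr ⟨fun _ => b, fun _ => hbB, ?_⟩
        rw [dist_pi_lt_iff hδ]
        exact fun _ => hd
      exact hsub this
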